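/- arXiv:2308.07300 — 7 statements merged into one kernel-verified Lean document; each statement's English description precedes it below -/
import Mathlib

section
/- Let D be a brane diagram and let D' be obtained from D by a single Hanany–Witten move at position p, i.e. the adjacent pair (β_p, β_{p+1}) = (NS5, D5) with surrounding D3 multiplicities d_{p−1}, d_p, d_{p+1} is replaced by (D5, NS5) with the middle multiplicity d_p replaced by d_{p−1} + d_{p+1} − d_p + 1, all other data unchanged. Then, under the natural correspondence of 5-branes (which exchanges the branes at positions p and p+1 and fixes all others), every NS5 brane and every D5 brane has the same charge in D' as in D. -/
/-- A (type A) brane diagram: a finite sequence of `N` 5-branes, each labeled NS5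
(`isNS5 = true`) or D5 (`isNS5 = false`), indexed by `0, …, N-1`, together with
D3-brane multiplicities `d 0, …, d N` attached to the gaps, with `d 0 = d N = 0`.
The data is normalized to vanish outside the relevant range. -/
structure BraneDiagram where
  N : ℕ
  isNS5 : ℕ → Bool
  d : ℕ → ℤ
  d_zero : d 0 = 0
  d_ge : ∀ i, N ≤ i → d i = 0
  isNS5_ge : ∀ p, N ≤ p → isNS5 p = false

/-- The charge of an NS5 brane at position `p`: `(d (p+1) - d p)` plus the number of
D5 branes at positions `< p`. -/
def BraneDiagram.nsCharge (D : BraneDiagram) (p : ℕ) : ℤ :=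
  (D.d (p + 1) - D.d p) + ((Finset.range p).filter (fun q => D.isNS5 q = false)).card

/-- The charge of a D5 brane at position `p`: `(d p - d (p+1))` plus the number of
NS5 branes at positions `> p`. -/
def BraneDiagram.d5Charge (D : BraneDiagram) (p : ℕ) : ℤ :=
  (D.d p - D.d (p + 1)) + ((Finset.Ico (p + 1) D.N).filter (fun q => D.isNS5 q = true)).card

/-- The charge of the brane at position `p`. -/
def BraneDiagram.charge (D : BraneDiagram) (p : ℕ) : ℤ :=
  if D.isNS5 p then D.nsCharge p else D.d5Charge p

/-- `HWMoveAt D D' p`: `D'` is obtained from `D` by a single Hanany-Witten move at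
position `p`, replacing the adjacent pair `(NS5, D5)` at positions `p, p+1` by
`(D5, NS5)` and replacing the middle multiplicity `d (p+1)` by
`d p + d (p+2) - d (p+1) + 1`, all other data unchanged. -/
def HWMoveAt (D D' : BraneDiagram) (p : ℕ) : Prop :=
  p + 1 < D.N ∧ D'.N = D.N ∧
  D.isNS5 p = true ∧ D.isNS5 (p + 1) = false ∧
  D'.isNS5 p = false ∧ D'.isNS5 (p + 1) = true ∧
  (∀ q, q ≠ p → q ≠ p + 1 → D'.isNS5 q = D.isNS5 q) ∧
  D'.d (p + 1) = D.d p + D.d (p + 2) - D.d (p + 1) + 1 ∧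
  (∀ i, i ≠ p + 1 → D'.d i = D.d i)

/-- A Hanany-Witten move (in the forward direction) at some position. -/
def HWMove (D D' : BraneDiagram) : Prop := ∃ p, HWMoveAt D D' p

/-- Hanany-Witten equivalence: the equivalence relation generated by Hanany-Witten
moves (and their inverses). -/
def HWEquiv : BraneDiagram → BraneDiagram → Prop := Relation.EqvGen HWMove

/-- A brane diagram is separated if every NS5 brane precedes every D5 brane. -/
def IsSeparated (D : BraneDiagram) : Prop :=
  ∀ p q, p < D.N → q < D.N → D.isNS5 p = true → D.isNS5 q = false → p < q

/-- A brane diagram is co-separated if every D5 brane precedes every NS5 brane. -/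
def IsCoseparated (D : BraneDiagram) : Prop :=
  ∀ p q, p < D.N → q < D.N → D.isNS5 p = false → D.isNS5 q = true → p < q

lemma card_filter_swap (f g : ℕ → Bool) (p : ℕ) (s : Finset ℕ) (hp : p ∈ s) (hp1 : p + 1 ∈ s)
    (hfg : ∀ q, q ≠ p → q ≠ p + 1 → g q = f q) (h1 : g p = f (p + 1)) (h2 : g (p + 1) = f p)
    (b : Bool) :
    (s.filter (fun q => g q = b)).card = (s.filter (fun q => f q = b)).card := by
  apply Finset.card_nbij' (fun q => Equiv.swap p (p + 1) q) (fun q => Equiv.swap p (p + 1) q)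
  · intro a ha
    simp only [Finset.mem_coe, Finset.mem_filter] at ha ⊢
    rcases eq_or_ne a p with rfl | hap
    · simpa [Equiv.swap_apply_left, ← h1] using ⟨hp1, ha.2⟩
    rcases eq_or_ne a (p + 1) with rfl | hap1
    · simpa [Equiv.swap_apply_right, ← h2] using ⟨hp, ha.2⟩
    · rw [Equiv.swap_apply_of_ne_of_ne hap hap1]
      exact ⟨ha.1, by rw [← hfg a hap hap1]; exact ha.2⟩
  · intro a ha
    simp only [Finset.mem_coe, Finset.mem_filter] at ha ⊢
    rcases eq_or_ne a p with rfl | hap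
    · simpa [Equiv.swap_apply_left, h2] using ⟨hp1, ha.2⟩
    rcases eq_or_ne a (p + 1) with rfl | hap1
    · simpa [Equiv.swap_apply_right, h1] using ⟨hp, ha.2⟩
    · rw [Equiv.swap_apply_of_ne_of_ne hap hap1]
      exact ⟨ha.1, by rw [hfg a hap hap1]; exact ha.2⟩
  · intro a _; exact Equiv.swap_apply_self _ _ a
  · intro a _; exact Equiv.swap_apply_self _ _ a

/-- Under a single Hanany-Witten move, all 5-brane charges are preserved, where the
natural correspondence of branes exchanges positions `p` and `p+1` and fixes all
other positions. -/
theorem stmt3 (D D' : BraneDiagram) (p : ℕ)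
    (hp : p + 1 < D.N)
    (hN : D'.N = D.N)
    (h1 : D.isNS5 p = true) (h2 : D.isNS5 (p + 1) = false)
    (h1' : D'.isNS5 p = false) (h2' : D'.isNS5 (p + 1) = true)
    (hlabel : ∀ q, q ≠ p → q ≠ p + 1 → D'.isNS5 q = D.isNS5 q)
    (hmid : D'.d (p + 1) = D.d p + D.d (p + 2) - D.d (p + 1) + 1)
    (hd : ∀ i, i ≠ p + 1 → D'.d i = D.d i) :
    (∀ q, q < D.N → q ≠ p → q ≠ p + 1 → D'.charge q = D.charge q)
      ∧ D'.nsCharge (p + 1) = D.nsCharge p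
      ∧ D'.d5Charge p = D.d5Charge (p + 1) := by
  have hp0 : p < D.N := lt_trans (Nat.lt_succ_self p) hp
  refine ⟨?_, ?_, ?_⟩
  · intro q hq hqp hqp1
    have hlab := hlabel q hqp hqp1
    have hdq : D'.d q = D.d q := hd q hqp1
    have hdq1 : D'.d (q + 1) = D.d (q + 1) := hd (q + 1) (by omega)
    unfold BraneDiagram.charge BraneDiagram.nsCharge BraneDiagram.d5Charge
    rw [hlab, hdq, hdq1, hN]
    rcases lt_or_gt_of_ne hqp with hlt | hgt
    · -- q < p
      have hrange : (Finset.range q).filter (fun r => D'.isNS5 r = false)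
          = (Finset.range q).filter (fun r => D.isNS5 r = false) := by
        apply Finset.filter_congr
        intro r hr
        rw [Finset.mem_range] at hr
        rw [hlabel r (by omega) (by omega)]
      have hico : ((Finset.Ico (q + 1) D.N).filter (fun r => D'.isNS5 r = true)).card
          = ((Finset.Ico (q + 1) D.N).filter (fun r => D.isNS5 r = true)).card := by
        apply card_filter_swap D.isNS5 D'.isNS5 p
        · rw [Finset.mem_Ico]; omega
        · rw [Finset.mem_Ico]; omega
        · exact hlabel
        · rw [h1', h2]
        · rw [h2', h1]
      rw [hrange, hico]
    · -- q > p + 1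
      have hrange : ((Finset.range q).filter (fun r => D'.isNS5 r = false)).card
          = ((Finset.range q).filter (fun r => D.isNS5 r = false)).card := by
        apply card_filter_swap D.isNS5 D'.isNS5 p
        · rw [Finset.mem_range]; omega
        · rw [Finset.mem_range]; omega
        · exact hlabel
        · rw [h1', h2]
        · rw [h2', h1]
      have hico : (Finset.Ico (q + 1) D.N).filter (fun r => D'.isNS5 r = true)
          = (Finset.Ico (q + 1) D.N).filter (fun r => D.isNS5 r = true) := by
        apply Finset.filter_congr
        intro r hr
        rw [Finset.mem_Ico] at hr
        rw [hlabel r (by omega) (by omega)]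
      rw [hrange, hico]
  · -- nsCharge
    unfold BraneDiagram.nsCharge
    have hd2 : D'.d (p + 1 + 1) = D.d (p + 2) := hd (p + 2) (by omega)
    rw [hd2, hmid]
    have hrange : (Finset.range (p + 1)).filter (fun r => D'.isNS5 r = false)
        = insert p ((Finset.range p).filter (fun r => D.isNS5 r = false)) := by
      rw [Finset.range_add_one, Finset.filter_insert, if_pos h1']
      congr 1
      apply Finset.filter_congr
      intro r hr
      rw [Finset.mem_range] at hr
      rw [hlabel r (by omega) (by omega)]
    rw [hrange, Finset.card_insert_of_notMem (by simp)]
    push_cast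
    ring
  · -- d5Charge
    unfold BraneDiagram.d5Charge
    have hdp : D'.d p = D.d p := hd p (by omega)
    rw [hdp, hmid, hN]
    have hico : (Finset.Ico (p + 1) D.N).filter (fun r => D'.isNS5 r = true)
        = insert (p + 1) ((Finset.Ico (p + 2) D.N).filter (fun r => D.isNS5 r = true)) := by
      have : Finset.Ico (p + 1) D.N = insert (p + 1) (Finset.Ico (p + 2) D.N) := by
        ext x; simp only [Finset.mem_Ico, Finset.mem_insert]; omega
      rw [this, Finset.filter_insert, if_pos h2']
      congr 1
      apply Finset.filter_congr
      intro r hr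
      rw [Finset.mem_Ico] at hr
      rw [hlabel r (by omega) (by omega)]
    rw [hico, Finset.card_insert_of_notMem (by simp)]
    push_cast
    ring
end

section
/- Every brane diagram is Hanany–Witten equivalent to a separated brane diagram (one in which every NS5 brane precedes every D5 brane), and also to a co-separated brane diagram (one in which every D5 brane precedes every NS5 brane). -/
/-!
Swapping an adjacent (D5, NS5) pair into (NS5, D5) is the inverse of a Hanany–Witten move,
and the reverse swap is a move, so either kind of adjacent transposition stays within the
Hanany–Witten class. An unsorted diagram always contains an adjacent pair in the wrong order,
and transposing it lowers the sum of the positions of the branes that should come first;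
this bubble sort terminates in a separated (resp. co-separated) diagram.
-/

lemma Nat.exists_succ_not_of_not {P : ℕ → Prop} {q p : ℕ} (hqp : q ≤ p) (hq : P q)
    (hp : ¬ P p) : ∃ r, q ≤ r ∧ r < p ∧ P r ∧ ¬ P (r + 1) := by
  induction p, hqp using Nat.le_induction with
  | base => exact absurd hq hp
  | succ n hqn ih =>
    by_cases hn : P n
    · exact ⟨n, hqn, n.lt_succ_self, hn, hp⟩
    · obtain ⟨r, hqr, hrn, hr, hr'⟩ := ih hn
      exact ⟨r, hqr, by omega, hr, hr'⟩

lemma Finset.sum_add_eq_of_eq_off_pair {ι M : Type*} [DecidableEq ι] [AddCommMonoid M]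
    {s : Finset ι} {a b : ι} (ha : a ∈ s) (hb : b ∈ s) (hab : a ≠ b) {g g' : ι → M}
    (hg : ∀ i ∈ s, i ≠ a → i ≠ b → g' i = g i) :
    ∑ i ∈ s, g' i + (g a + g b) = ∑ i ∈ s, g i + (g' a + g' b) := by
  have hsub : {a, b} ⊆ s := insert_subset ha (singleton_subset_iff.2 hb)
  have rest : ∑ i ∈ s \ {a, b}, g' i = ∑ i ∈ s \ {a, b}, g i :=
    sum_congr rfl fun i hi => by
      simp only [mem_sdiff, mem_insert, mem_singleton, not_or] at hi
      exact hg i hi.1 hi.2.1 hi.2.2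
  rw [← sum_sdiff hsub, ← sum_sdiff (f := g) hsub, sum_pair hab, sum_pair hab, rest]
  abel

namespace BraneDiagram

def SortedBy (b : Bool) (D : BraneDiagram) : Prop :=
  ∀ p q, p < D.N → q < D.N → D.isNS5 p = b → D.isNS5 q = !b → p < q

def weight (b : Bool) (D : BraneDiagram) : ℕ :=
  ∑ i ∈ Finset.range D.N, if D.isNS5 i = b then i else 0

def swap (D : BraneDiagram) (p : ℕ) (h : p + 1 < D.N) : BraneDiagram where
  N := D.N
  isNS5 := D.isNS5 ∘ Equiv.swap p (p + 1)
  d i := if i = p + 1 then D.d p + D.d (p + 2) - D.d (p + 1) + 1 else D.d i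
  d_zero := by simp [D.d_zero]
  d_ge i hi := by simp [show i ≠ p + 1 by omega, D.d_ge i hi]
  isNS5_ge q hq := by
    simp [Equiv.swap_apply_of_ne_of_ne (show q ≠ p by omega) (show q ≠ p + 1 by omega),
      D.isNS5_ge q hq]

section swap

variable {D : BraneDiagram} {p : ℕ} {h : p + 1 < D.N}

@[simp] lemma swap_N : (D.swap p h).N = D.N := rfl

@[simp] lemma swap_isNS5_left : (D.swap p h).isNS5 p = D.isNS5 (p + 1) := by
  simp [swap]

@[simp] lemma swap_isNS5_right : (D.swap p h).isNS5 (p + 1) = D.isNS5 p := by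
  simp [swap]

lemma swap_isNS5_of_ne {q : ℕ} (hp : q ≠ p) (hp' : q ≠ p + 1) :
    (D.swap p h).isNS5 q = D.isNS5 q := by
  simp [swap, Equiv.swap_apply_of_ne_of_ne hp hp']

lemma swap_d_of_ne {i : ℕ} (hi : i ≠ p + 1) : (D.swap p h).d i = D.d i := by
  simp [swap, hi]

lemma hwMoveAt_swap (hp : D.isNS5 p = true) (hp' : D.isNS5 (p + 1) = false) :
    HWMoveAt D (D.swap p h) p :=
  ⟨h, rfl, hp, hp', by simpa using hp', by simpa using hp, fun _ => swap_isNS5_of_ne,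
    by simp [swap], fun _ => swap_d_of_ne⟩

-- `x ↦ d p + d (p + 2) - x + 1` is an involution, so a move undoes the swap of a (D5, NS5) pair.
lemma hwMoveAt_swap_self (hp : D.isNS5 p = false) (hp' : D.isNS5 (p + 1) = true) :
    HWMoveAt (D.swap p h) D p :=
  ⟨h, rfl, by simpa using hp', by simpa using hp, hp, hp',
    fun _ hq hq' => (swap_isNS5_of_ne hq hq').symm, by simp [swap]; ring,
    fun _ hi => (swap_d_of_ne hi).symm⟩

lemma hwEquiv_swap (hne : D.isNS5 p ≠ D.isNS5 (p + 1)) : HWEquiv D (D.swap p h) := by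
  cases hp : D.isNS5 p
  · have hp' : D.isNS5 (p + 1) = true := by simpa [hp] using hne.symm
    exact .symm _ _ (.rel _ _ ⟨p, hwMoveAt_swap_self hp hp'⟩)
  · have hp' : D.isNS5 (p + 1) = false := by simpa [hp] using hne.symm
    exact .rel _ _ ⟨p, hwMoveAt_swap hp hp'⟩

end swap

variable {b : Bool}

lemma exists_adjacent_of_not_sortedBy {D : BraneDiagram} (hD : ¬ D.SortedBy b) :
    ∃ r, r + 1 < D.N ∧ D.isNS5 r = !b ∧ D.isNS5 (r + 1) = b := by
  simp only [SortedBy, not_forall, not_lt] at hD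
  obtain ⟨p, q, hp, -, hpb, hqb, hqp⟩ := hD
  obtain ⟨r, -, hrp, hr, hr'⟩ :=
    Nat.exists_succ_not_of_not (P := fun i => D.isNS5 i = !b) hqp hqb (by simp [hpb])
  exact ⟨r, by omega, hr, by simpa using hr'⟩

lemma weight_swap_add_one {D : BraneDiagram} {r : ℕ} (hr : r + 1 < D.N)
    (hrb : D.isNS5 r = !b) (hrb' : D.isNS5 (r + 1) = b) :
    (D.swap r hr).weight b + 1 = D.weight b := by
  have key := Finset.sum_add_eq_of_eq_off_pair (Finset.mem_range.2 (by omega))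
    (Finset.mem_range.2 hr) r.succ_ne_self.symm
    (g := fun i => if D.isNS5 i = b then i else 0)
    (g' := fun i => if (D.swap r hr).isNS5 i = b then i else 0)
    fun i _ hi hi' => by simp only [swap_isNS5_of_ne hi hi']
  simp only [swap_isNS5_left, swap_isNS5_right, hrb, hrb', Bool.not_ne_self, ↓reduceIte] at key
  simp only [weight, swap_N]
  omega

theorem exists_hwEquiv_sortedBy (b : Bool) (D : BraneDiagram) :
    ∃ D', HWEquiv D D' ∧ D'.SortedBy b := by
  induction hw : D.weight b using Nat.strong_induction_on generalizing D with
  | _ n ih =>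
    by_cases hD : D.SortedBy b
    · exact ⟨D, .refl D, hD⟩
    obtain ⟨r, hr, hrb, hrb'⟩ := exists_adjacent_of_not_sortedBy hD
    have hlt : (D.swap r hr).weight b < n := by
      have := weight_swap_add_one hr hrb hrb'
      omega
    obtain ⟨D', hD', hsorted⟩ := ih _ hlt _ rfl
    exact ⟨D', .trans _ _ _ (hwEquiv_swap (by simp [hrb, hrb'])) hD', hsorted⟩

end BraneDiagram

/-- Every brane diagram is Hanany-Witten equivalent to a separated brane diagram,
and also to a co-separated brane diagram. -/
theorem stmt4 (D : BraneDiagram) :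
    (∃ D₁, HWEquiv D D₁ ∧ IsSeparated D₁) ∧ (∃ D₂, HWEquiv D D₂ ∧ IsCoseparated D₂) :=
  ⟨D.exists_hwEquiv_sortedBy true, D.exists_hwEquiv_sortedBy false⟩
end

section
/- Two brane diagrams are Hanany–Witten equivalent if and only if they have the same NS5 charge vector and the same D5 charge vector, where the NS5 (respectively D5) charge vector of a diagram is the sequence of charges of its NS5 (respectively D5) branes read in left-to-right order. -/
/-- The NS5 charge vector: charges of the NS5 branes in left-to-right order. -/
def nsChargeVector (D : BraneDiagram) : List ℤ :=
  ((List.range D.N).filter (fun p => D.isNS5 p)).map D.nsCharge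

/-- The D5 charge vector: charges of the D5 branes in left-to-right order. -/
def d5ChargeVector (D : BraneDiagram) : List ℤ :=
  ((List.range D.N).filter (fun p => !D.isNS5 p)).map D.d5Charge


/-- Counting a label among a set is unchanged by swapping labels at `p`, `p+1`. -/
lemma count_swap {f f' : ℕ → Bool} {p : ℕ}
    (h1 : f' p = f (p+1)) (h2 : f' (p+1) = f p)
    (h3 : ∀ q, q ≠ p → q ≠ p+1 → f' q = f q)
    (s : Finset ℕ) (hs : p ∈ s ↔ p+1 ∈ s) (b : Bool) :
    (s.filter (fun q => f' q = b)).card = (s.filter (fun q => f q = b)).card := by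
  apply Finset.card_equiv (Equiv.swap p (p+1))
  intro i
  rcases eq_or_ne i p with rfl | hip
  · simp [Equiv.swap_apply_left, Finset.mem_filter, hs, h1]
  rcases eq_or_ne i (p+1) with rfl | hip1
  · simp [Equiv.swap_apply_right, Finset.mem_filter, hs, h2]
  · rw [Equiv.swap_apply_of_ne_of_ne hip hip1]
    simp [Finset.mem_filter, h3 i hip hip1]

lemma filter_map_congr {f f' : ℕ → Bool} {c c' : ℕ → ℤ} :
    ∀ l : List ℕ, (∀ q ∈ l, f q = f' q) → (∀ q ∈ l, f q = true → c q = c' q) →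
    (l.filter f).map c = (l.filter f').map c' := by
  intro l
  induction l with
  | nil => simp
  | cons a l ih =>
    intro hl hc
    have ha := hl a (by simp)
    rw [List.filter_cons, List.filter_cons, ← ha]
    have ihs := ih (fun q hq => hl q (by simp [hq])) (fun q hq => hc q (by simp [hq]))
    cases hfa : f a with
    | true => simp only [if_pos]; rw [List.map_cons, List.map_cons, hc a (by simp) hfa, ihs]
    | false => simpa using ihs

lemma map_range_inj {f g : ℕ → ℤ} {n : ℕ}
    (h : (List.range n).map f = (List.range n).map g) : ∀ k, k < n → f k = g k := by
  have := List.map_inj_left.mp h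
  intro k hk
  exact this k (List.mem_range.mpr hk)
lemma moveAt_vectors {D D' : BraneDiagram} {p : ℕ} (h : HWMoveAt D D' p) :
    nsChargeVector D = nsChargeVector D' ∧ d5ChargeVector D = d5ChargeVector D' := by
  obtain ⟨hp, hN, hf1, hf2, hf1', hf2', hf, hd1, hd⟩ := h
  have hdp : D'.d p = D.d p := hd p (by omega)
  have hdp2 : D'.d (p+2) = D.d (p+2) := hd (p+2) (by omega)
  have hcount : ∀ (s : Finset ℕ), (p ∈ s ↔ p+1 ∈ s) → ∀ b : Bool,
      (s.filter (fun q => D'.isNS5 q = b)).card = (s.filter (fun q => D.isNS5 q = b)).card := by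
    intro s hs b
    exact count_swap (by rw [hf1', hf2]) (by rw [hf2', hf1]) hf s hs b
  have hns : ∀ q, q < p ∨ p + 2 ≤ q → D.nsCharge q = D'.nsCharge q := by
    intro q hq
    unfold BraneDiagram.nsCharge
    rw [hd q (by omega), hd (q+1) (by omega),
      hcount (Finset.range q) (by simp only [Finset.mem_range]; omega) false]
  have hd5 : ∀ q, q < p ∨ p + 2 ≤ q → D.d5Charge q = D'.d5Charge q := by
    intro q hq
    unfold BraneDiagram.d5Charge
    rw [hN, hd q (by omega), hd (q+1) (by omega),
      hcount (Finset.Ico (q+1) D.N) (by simp only [Finset.mem_Ico]; omega) true]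
  have hmidns : D.nsCharge p = D'.nsCharge (p+1) := by
    unfold BraneDiagram.nsCharge
    have hc : ((Finset.range (p+1)).filter (fun q => D'.isNS5 q = false)).card
        = ((Finset.range p).filter (fun q => D.isNS5 q = false)).card + 1 := by
      rw [Finset.range_add_one, Finset.filter_insert, if_pos hf1',
        Finset.card_insert_of_notMem (by simp),
        Finset.filter_congr (fun x hx => by
          rw [hf x (by rintro rfl; exact absurd hx (by simp)) (by rintro rfl; simp at hx)])]
    rw [hc, hdp2, hd1]
    push_cast
    ring
  have hmidd5 : D.d5Charge (p+1) = D'.d5Charge p := by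
    unfold BraneDiagram.d5Charge
    rw [hN]
    have hIco : insert (p+1) (Finset.Ico (p+2) D.N) = Finset.Ico (p+1) D.N :=
      Finset.insert_Ico_add_one_left_eq_Ico hp
    have hc : ((Finset.Ico (p+1) D.N).filter (fun q => D'.isNS5 q = true)).card
        = ((Finset.Ico (p+2) D.N).filter (fun q => D.isNS5 q = true)).card + 1 := by
      rw [← hIco, Finset.filter_insert, if_pos hf2',
        Finset.card_insert_of_notMem (by simp [Finset.mem_Ico]),
        Finset.filter_congr (fun x hx => by
          rw [hf x (by simp only [Finset.mem_Ico] at hx; omega)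
            (by simp only [Finset.mem_Ico] at hx; omega)])]
    rw [hc, hdp, hd1]
    push_cast
    ring
  have hNd : D.N = (p+1+1) + (D.N - (p+2)) := by omega
  have htail : ∀ q ∈ (List.range (D.N - (p+2))).map ((p+2) + ·), p + 2 ≤ q := by
    intro q hq
    simp only [List.mem_map, List.mem_range] at hq
    omega
  constructor
  · unfold nsChargeVector
    rw [hN]
    conv_lhs => rw [hNd]
    conv_rhs => rw [hNd]
    rw [List.range_add, List.range_succ, List.range_succ]
    simp only [List.filter_append, List.map_append]
    have hA : ((List.range p).filter (fun q => D.isNS5 q)).map D.nsCharge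
        = ((List.range p).filter (fun q => D'.isNS5 q)).map D'.nsCharge := by
      refine filter_map_congr _ (fun q hq => ?_) (fun q hq _ => hns q (Or.inl (List.mem_range.mp hq)))
      rw [hf q (by have := List.mem_range.mp hq; omega) (by have := List.mem_range.mp hq; omega)]
    have hT : (((List.range (D.N - (p+2))).map ((p+2) + ·)).filter (fun q => D.isNS5 q)).map D.nsCharge
        = (((List.range (D.N - (p+2))).map ((p+2) + ·)).filter (fun q => D'.isNS5 q)).map D'.nsCharge := by
      refine filter_map_congr _ (fun q hq => ?_) (fun q hq _ => hns q (Or.inr (htail q hq)))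
      rw [hf q (by have := htail q hq; omega) (by have := htail q hq; omega)]
    rw [hA, hT]
    simp [List.filter_cons, hf1, hf2, hf1', hf2', hmidns]
  · unfold d5ChargeVector
    rw [hN]
    conv_lhs => rw [hNd]
    conv_rhs => rw [hNd]
    rw [List.range_add, List.range_succ, List.range_succ]
    simp only [List.filter_append, List.map_append]
    have hA : ((List.range p).filter (fun q => !D.isNS5 q)).map D.d5Charge
        = ((List.range p).filter (fun q => !D'.isNS5 q)).map D'.d5Charge := by
      refine filter_map_congr _ (fun q hq => ?_) (fun q hq _ => hd5 q (Or.inl (List.mem_range.mp hq)))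
      rw [hf q (by have := List.mem_range.mp hq; omega) (by have := List.mem_range.mp hq; omega)]
    have hT : (((List.range (D.N - (p+2))).map ((p+2) + ·)).filter (fun q => !D.isNS5 q)).map D.d5Charge
        = (((List.range (D.N - (p+2))).map ((p+2) + ·)).filter (fun q => !D'.isNS5 q)).map D'.d5Charge := by
      refine filter_map_congr _ (fun q hq => ?_) (fun q hq _ => hd5 q (Or.inr (htail q hq)))
      rw [hf q (by have := htail q hq; omega) (by have := htail q hq; omega)]
    rw [hA, hT]
    simp [List.filter_cons, hf1, hf2, hf1', hf2', hmidd5]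
/-- Measure: total number of (D5, NS5) inversions. -/
def mu (D : BraneDiagram) : ℕ :=
  ∑ q ∈ Finset.range D.N,
    (if D.isNS5 q = true then ((Finset.range q).filter (fun r => D.isNS5 r = false)).card else 0)

lemma moveAt_mu {E E' : BraneDiagram} {p : ℕ} (h : HWMoveAt E E' p) : mu E' = mu E + 1 := by
  obtain ⟨hp, hN, hf1, hf2, hf1', hf2', hf, hd1, hd⟩ := h
  unfold mu
  rw [hN]
  set g : ℕ → ℕ := fun q =>
    (if E.isNS5 q = true then ((Finset.range q).filter (fun r => E.isNS5 r = false)).card else 0) with hg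
  set g' : ℕ → ℕ := fun q =>
    (if E'.isNS5 q = true then ((Finset.range q).filter (fun r => E'.isNS5 r = false)).card else 0) with hg'
  have hmemp : p ∈ Finset.range E.N := Finset.mem_range.mpr (by omega)
  have hmemp1 : p + 1 ∈ (Finset.range E.N).erase p := by
    rw [Finset.mem_erase]; exact ⟨by omega, Finset.mem_range.mpr hp⟩
  have hsplit : ∀ f : ℕ → ℕ, ∑ q ∈ Finset.range E.N, f q
      = ∑ q ∈ ((Finset.range E.N).erase p).erase (p+1), f q + f (p+1) + f p := by
    intro f
    rw [Finset.sum_erase_add _ _ hmemp1, Finset.sum_erase_add _ _ hmemp]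
  rw [hsplit g, hsplit g']
  have hcongr : ∑ q ∈ ((Finset.range E.N).erase p).erase (p+1), g' q
      = ∑ q ∈ ((Finset.range E.N).erase p).erase (p+1), g q := by
    refine Finset.sum_congr rfl (fun q hq => ?_)
    simp only [Finset.mem_erase, Finset.mem_range] at hq
    obtain ⟨hq1, hq2, hq3⟩ := hq
    simp only [hg, hg', hf q hq2 hq1]
    rcases lt_or_ge q p with hqp | hqp
    · have : ∀ r ∈ Finset.range q, (E'.isNS5 r = false) ↔ (E.isNS5 r = false) := by
        intro r hr
        rw [hf r (by simp only [Finset.mem_range] at hr; omega)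
          (by simp only [Finset.mem_range] at hr; omega)]
      rw [Finset.filter_congr this]
    · have hq4 : p + 2 ≤ q := by omega
      rw [count_swap (f := E.isNS5) (f' := E'.isNS5) (by rw [hf1', hf2]) (by rw [hf2', hf1]) hf
        (Finset.range q) (by simp only [Finset.mem_range]; omega) false]
  rw [hcongr]
  have hgp : g p = ((Finset.range p).filter (fun r => E.isNS5 r = false)).card := by
    simp only [hg, if_pos hf1]
  have hgp1 : g (p+1) = 0 := by simp only [hg, hf2]; simp
  have hg'p : g' p = 0 := by simp only [hg', hf1']; simp
  have hg'p1 : g' (p+1) = ((Finset.range p).filter (fun r => E.isNS5 r = false)).card + 1 := by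
    simp only [hg', if_pos hf2']
    rw [Finset.range_add_one, Finset.filter_insert, if_pos hf1',
      Finset.card_insert_of_notMem (by simp),
      Finset.filter_congr (fun x hx => by
        rw [hf x (by rintro rfl; exact absurd hx (by simp)) (by rintro rfl; simp at hx)])]
  omega

lemma exists_adj {f : ℕ → Bool} : ∀ k r, f r = false → f (r + (k+1)) = true →
    ∃ p, r ≤ p ∧ p + 1 ≤ r + (k+1) ∧ f p = false ∧ f (p+1) = true := by
  intro k
  induction k with
  | zero => intro r h1 h2; exact ⟨r, le_refl _, by omega, h1, h2⟩
  | succ k ih =>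
    intro r h1 h2
    cases hfk : f (r + (k+1)) with
    | true =>
      obtain ⟨p, hp1, hp2, hp3, hp4⟩ := ih r h1 hfk
      exact ⟨p, hp1, by omega, hp3, hp4⟩
    | false =>
      exact ⟨r + (k+1), by omega, by omega, hfk,
        by rw [show r+(k+1)+1 = r+(k+1+1) from by omega]; exact h2⟩

lemma sep_of_mu_zero {D : BraneDiagram} (h : mu D = 0) : IsSeparated D := by
  intro a b ha hb hfa hfb
  unfold mu at h
  rw [Finset.sum_eq_zero_iff] at h
  have := h a (Finset.mem_range.mpr ha)
  rw [if_pos hfa, Finset.card_eq_zero, Finset.filter_eq_empty_iff] at this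
  by_contra hab
  refine this (Finset.mem_range.mpr (by
    rcases Nat.lt_or_ge b a with h' | h'
    · exact h'
    · exfalso; apply hab; rcases Nat.eq_or_lt_of_le h' with rfl | h''
      · rw [hfa] at hfb; exact absurd hfb (by simp)
      · exact h'')) hfb

lemma toSepAux : ∀ n (D : BraneDiagram), mu D ≤ n → ∃ D₀, IsSeparated D₀ ∧ HWEquiv D D₀ := by
  intro n
  induction n with
  | zero =>
    intro D hD
    exact ⟨D, sep_of_mu_zero (Nat.le_zero.mp hD), Relation.EqvGen.refl D⟩
  | succ n ih =>
    intro D hD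
    by_cases h0 : mu D = 0
    · exact ⟨D, sep_of_mu_zero h0, Relation.EqvGen.refl D⟩
    -- find an inversion
    have hex : ∃ p, p + 1 < D.N ∧ D.isNS5 p = false ∧ D.isNS5 (p+1) = true := by
      unfold mu at h0
      have : ∃ q ∈ Finset.range D.N,
          (if D.isNS5 q = true then ((Finset.range q).filter (fun r => D.isNS5 r = false)).card else 0) ≠ 0 := by
        by_contra hcon
        push_neg at hcon
        exact h0 (Finset.sum_eq_zero hcon)
      obtain ⟨q, hq, hq0⟩ := this
      rw [Finset.mem_range] at hq
      by_cases hfq : D.isNS5 q = true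
      · rw [if_pos hfq] at hq0
        have : ∃ r ∈ Finset.range q, D.isNS5 r = false := by
          by_contra hcon
          push_neg at hcon
          exact hq0 (Finset.card_eq_zero.mpr (Finset.filter_eq_empty_iff.mpr
            (fun r hr h' => (hcon r hr) h')))
        obtain ⟨r, hr, hfr⟩ := this
        rw [Finset.mem_range] at hr
        have hq' : q = r + ((q - r - 1) + 1) := by omega
        obtain ⟨p, hp1, hp2, hp3, hp4⟩ := exists_adj (q - r - 1) r hfr (by rw [← hq']; exact hfq)
        exact ⟨p, by omega, hp3, hp4⟩
      · rw [if_neg hfq] at hq0; exact absurd rfl hq0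
    obtain ⟨p, hpN, hfp, hfp1⟩ := hex
    set E : BraneDiagram :=
      { N := D.N
        isNS5 := fun q => if q = p then true else if q = p+1 then false else D.isNS5 q
        d := fun i => if i = p+1 then D.d p + D.d (p+2) - D.d (p+1) + 1 else D.d i
        d_zero := by rw [if_neg (by omega : ¬ (0:ℕ) = p+1)]; exact D.d_zero
        d_ge := fun i hi => by rw [if_neg (by omega : ¬ i = p+1)]; exact D.d_ge i hi
        isNS5_ge := fun q hq => by
          rw [if_neg (by omega : ¬ q = p), if_neg (by omega : ¬ q = p+1)]; exact D.isNS5_ge q hq } with hE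
    have hmv : HWMoveAt E D p := by
      refine ⟨hpN, rfl, ?_, ?_, hfp, hfp1, ?_, ?_, ?_⟩
      · show (if p = p then true else _) = true
        rw [if_pos rfl]
      · show (if p+1 = p then true else if p+1 = p+1 then false else _) = false
        rw [if_neg (by omega), if_pos rfl]
      · intro q hq1 hq2
        show D.isNS5 q = (if q = p then _ else if q = p+1 then _ else D.isNS5 q)
        rw [if_neg hq1, if_neg hq2]
      · show D.d (p+1) = (if p = p+1 then _ else D.d p) + (if p+2 = p+1 then _ else D.d (p+2))
          - (if p+1 = p+1 then D.d p + D.d (p+2) - D.d (p+1) + 1 else _) + 1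
        rw [if_neg (by omega), if_neg (by omega), if_pos rfl]
        ring
      · intro i hi
        show D.d i = if i = p+1 then _ else D.d i
        rw [if_neg hi]
    have hmu : mu D = mu E + 1 := moveAt_mu hmv
    obtain ⟨D₀, hsep, heq⟩ := ih E (by omega)
    exact ⟨D₀, hsep, Relation.EqvGen.trans _ _ _
      (Relation.EqvGen.symm _ _ (Relation.EqvGen.rel E D ⟨p, hmv⟩)) heq⟩

lemma toSep (D : BraneDiagram) : ∃ D₀, IsSeparated D₀ ∧ HWEquiv D D₀ :=
  toSepAux (mu D) D (le_refl _)
lemma BD_ext {D D' : BraneDiagram} (h1 : D.N = D'.N) (h2 : D.isNS5 = D'.isNS5)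
    (h3 : D.d = D'.d) : D = D' := by
  cases D; cases D'; simp_all

lemma sep_struct {D : BraneDiagram} (h : IsSeparated D) :
    ∃ n, n ≤ D.N ∧ (∀ q, D.isNS5 q = true ↔ q < n) := by
  classical
  set S : Finset ℕ := (Finset.range D.N).filter (fun q => D.isNS5 q = true) with hS
  refine ⟨S.card, le_trans (Finset.card_filter_le _ _) (by simp), fun q => ?_⟩
  constructor
  · intro hq
    have hqN : q < D.N := by
      by_contra hcon
      rw [D.isNS5_ge q (by omega)] at hq
      exact absurd hq (by simp)
    have hsub : Finset.range (q+1) ⊆ S := by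
      intro r hr
      rw [Finset.mem_range] at hr
      have hrN : r < D.N := by omega
      rw [hS, Finset.mem_filter, Finset.mem_range]
      refine ⟨hrN, ?_⟩
      cases hfr : D.isNS5 r with
      | true => rfl
      | false => exact absurd (h q r hqN hrN hq hfr) (by omega)
    have := Finset.card_le_card hsub
    rw [Finset.card_range] at this
    omega
  · intro hq
    by_contra hcon
    have hfq : D.isNS5 q = false := by
      cases hfq : D.isNS5 q with
      | true => exact absurd hfq hcon
      | false => rfl
    rcases Nat.lt_or_ge q D.N with hqN | hqN
    · have hsub : S ⊆ Finset.range q := by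
        intro s hs
        rw [hS, Finset.mem_filter, Finset.mem_range] at hs
        exact Finset.mem_range.mpr (h s q hs.1 hqN hs.2 hfq)
      have := Finset.card_le_card hsub
      rw [Finset.card_range] at this
      omega
    · have : S.card ≤ D.N := le_trans (Finset.card_filter_le _ _) (by simp)
      omega

lemma sep_ns_list {D : BraneDiagram} {n : ℕ} (hn : n ≤ D.N)
    (hiff : ∀ q, D.isNS5 q = true ↔ q < n) :
    (List.range D.N).filter (fun q => D.isNS5 q) = List.range n := by
  rw [show D.N = n + (D.N - n) from by omega, List.range_add, List.filter_append]
  have h1 : (List.range n).filter (fun q => D.isNS5 q) = List.range n :=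
    List.filter_eq_self.mpr (fun a ha => (hiff a).mpr (List.mem_range.mp ha))
  have h2 : ((List.range (D.N - n)).map (n + ·)).filter (fun q => D.isNS5 q) = [] := by
    rw [List.filter_eq_nil_iff]
    intro a ha
    simp only [List.mem_map, List.mem_range] at ha
    obtain ⟨x, _, rfl⟩ := ha
    simp only [Bool.not_eq_true]
    cases hfa : D.isNS5 (n + x) with
    | false => rfl
    | true => exact absurd ((hiff _).mp hfa) (by omega)
  rw [h1, h2, List.append_nil]

lemma sep_d5_list {D : BraneDiagram} {n : ℕ} (hn : n ≤ D.N)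
    (hiff : ∀ q, D.isNS5 q = true ↔ q < n) :
    (List.range D.N).filter (fun q => !D.isNS5 q) = (List.range (D.N - n)).map (n + ·) := by
  conv_lhs => rw [show D.N = n + (D.N - n) from by omega, List.range_add]
  rw [List.filter_append]
  have h1 : (List.range n).filter (fun q => !D.isNS5 q) = [] := by
    rw [List.filter_eq_nil_iff]
    intro a ha
    rw [(hiff a).mpr (List.mem_range.mp ha)]
    simp
  have h2 : ((List.range (D.N - n)).map (n + ·)).filter (fun q => !D.isNS5 q)
      = (List.range (D.N - n)).map (n + ·) := by
    refine List.filter_eq_self.mpr (fun a ha => ?_)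
    simp only [List.mem_map, List.mem_range] at ha
    obtain ⟨x, _, rfl⟩ := ha
    cases hfa : D.isNS5 (n + x) with
    | false => rfl
    | true => exact absurd ((hiff _).mp hfa) (by omega)
  rw [h1, List.nil_append, h2]

lemma sep_unique {D D' : BraneDiagram} (h : IsSeparated D) (h' : IsSeparated D')
    (h1 : nsChargeVector D = nsChargeVector D')
    (h2 : d5ChargeVector D = d5ChargeVector D') : D = D' := by
  obtain ⟨n, hn, hiff⟩ := sep_struct h
  obtain ⟨n', hn', hiff'⟩ := sep_struct h'
  unfold nsChargeVector at h1
  unfold d5ChargeVector at h2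
  rw [sep_ns_list hn hiff, sep_ns_list hn' hiff'] at h1
  rw [sep_d5_list hn hiff, sep_d5_list hn' hiff'] at h2
  -- lengths
  have hnn : n = n' := by
    have := congrArg List.length h1
    simpa using this
  subst hnn
  have hNN : D.N = D'.N := by
    have := congrArg List.length h2
    simp only [List.length_map, List.length_range] at this
    omega
  -- pointwise charge equalities
  have hns : ∀ k, k < n → D.nsCharge k = D'.nsCharge k := map_range_inj h1
  have hd5 : ∀ k, k < D.N - n → D.d5Charge (n + k) = D'.d5Charge (n + k) := by
    rw [List.map_map, List.map_map, ← hNN] at h2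
    exact fun k hk => map_range_inj h2 k hk
  -- d equality
  have hdeq : ∀ i, D.d i = D'.d i := by
    intro i
    induction i with
    | zero => rw [D.d_zero, D'.d_zero]
    | succ i ih =>
      rcases Nat.lt_or_ge i D.N with hiN | hiN
      · rcases Nat.lt_or_ge i n with hin | hin
        · have hc := hns i hin
          unfold BraneDiagram.nsCharge at hc
          have e1 : (Finset.range i).filter (fun r => D.isNS5 r = false) = ∅ :=
            Finset.filter_eq_empty_iff.mpr (fun r hr => by
              rw [(hiff r).mpr (by rw [Finset.mem_range] at hr; omega)]; simp)
          have e2 : (Finset.range i).filter (fun r => D'.isNS5 r = false) = ∅ :=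
            Finset.filter_eq_empty_iff.mpr (fun r hr => by
              rw [(hiff' r).mpr (by rw [Finset.mem_range] at hr; omega)]; simp)
          rw [e1, e2] at hc
          simp only [Finset.card_empty, Nat.cast_zero, add_zero] at hc
          omega
        · have hc := hd5 (i - n) (by omega)
          rw [show n + (i - n) = i from by omega] at hc
          unfold BraneDiagram.d5Charge at hc
          have e1 : (Finset.Ico (i+1) D.N).filter (fun r => D.isNS5 r = true) = ∅ :=
            Finset.filter_eq_empty_iff.mpr (fun r hr hcon => by
              rw [Finset.mem_Ico] at hr
              have := (hiff r).mp hcon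
              omega)
          have e2 : (Finset.Ico (i+1) D'.N).filter (fun r => D'.isNS5 r = true) = ∅ :=
            Finset.filter_eq_empty_iff.mpr (fun r hr hcon => by
              rw [Finset.mem_Ico] at hr
              have := (hiff' r).mp hcon
              omega)
          rw [e1, e2] at hc
          simp only [Finset.card_empty, Nat.cast_zero, add_zero] at hc
          omega
      · rw [D.d_ge (i+1) (by omega), D'.d_ge (i+1) (by omega)]
  refine BD_ext hNN (funext fun q => ?_) (funext hdeq)
  rcases Nat.lt_or_ge q n with hq | hq
  · rw [(hiff q).mpr hq, (hiff' q).mpr hq]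
  · have e1 : D.isNS5 q = false := by
      cases hfq : D.isNS5 q with
      | false => rfl
      | true => exact absurd ((hiff q).mp hfq) (by omega)
    have e2 : D'.isNS5 q = false := by
      cases hfq : D'.isNS5 q with
      | false => rfl
      | true => exact absurd ((hiff' q).mp hfq) (by omega)
    rw [e1, e2]
lemma equiv_vectors {D D' : BraneDiagram} (h : HWEquiv D D') :
    nsChargeVector D = nsChargeVector D' ∧ d5ChargeVector D = d5ChargeVector D' := by
  induction h with
  | rel a b hab => obtain ⟨p, hp⟩ := hab; exact moveAt_vectors hp
  | refl a => exact ⟨rfl, rfl⟩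
  | symm a b _ ih => exact ⟨ih.1.symm, ih.2.symm⟩
  | trans a b c _ _ ih1 ih2 => exact ⟨ih1.1.trans ih2.1, ih1.2.trans ih2.2⟩

/-- Two brane diagrams are Hanany-Witten equivalent if and only if they have the
same NS5 charge vector and the same D5 charge vector. -/
theorem stmt5 (D D' : BraneDiagram) :
    HWEquiv D D' ↔
      nsChargeVector D = nsChargeVector D' ∧ d5ChargeVector D = d5ChargeVector D' := by
  constructor
  · exact equiv_vectors
  · rintro ⟨h1, h2⟩
    obtain ⟨D₀, hsep, heq⟩ := toSep D
    obtain ⟨D₀', hsep', heq'⟩ := toSep D'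
    have v := equiv_vectors heq
    have v' := equiv_vectors heq'
    have h0 : D₀ = D₀' :=
      sep_unique hsep hsep' (by rw [← v.1, h1, v'.1]) (by rw [← v.2, h2, v'.2])
    exact Relation.EqvGen.trans _ _ _ heq (h0 ▸ Relation.EqvGen.symm _ _ heq')
end

section
/- Let K be a commutative ring, W₋ and W₊ K-modules, and let B₋ ∈ End(W₋), B₊ ∈ End(W₊), A ∈ Hom(W₊, W₋), a ∈ W₋ (identified with a map K → W₋), b ∈ Hom(W₊, K). On W := W₊ × K define: B'(x, λ) := (B₊x, b(x)); A'(x, λ) := A(x) − λ·a; a' := −B₋(a); b'(x, λ) := −λ; ι(x) := (x, 0); a''(λ) := (0, −λ); b'' := b. Then: (i) B' ∘ ι − ι ∘ B₊ + a'' ∘ b'' = 0 holds identically; and (ii) B₋ ∘ A' − A' ∘ B' + a'·b' = 0 (where a'·b' denotes the map (x,λ) ↦ b'(x,λ)·a') holds if and only if B₋ ∘ A − A ∘ B₊ + a·b = 0 (where a·b is the map x ↦ b(x)·a). -/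
/-! The `λ`-dependent terms of the resolved moment map, `-λ • B₋ a` from `B₋ ∘ A'` and
`λ • B₋ a` from `a' · b'`, cancel, so the resolved moment map at `(x, λ)` is the original one at `x`. -/

theorem resolved_moment_map_eq {K : Type*} [CommRing K] {Wm Wp : Type*}
    [AddCommGroup Wm] [Module K Wm] [AddCommGroup Wp]
    (Bm : Wm →ₗ[K] Wm) (Bp : Wp → Wp) (A : Wp → Wm) (a : Wm) (b : Wp → K) (x : Wp) (l : K) :
    Bm (A x - l • a) - (A (Bp x) - b x • a) + (-l) • (-(Bm a)) =
      Bm (A x) - A (Bp x) + b x • a := by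
  rw [map_sub, map_smul, neg_smul_neg]
  abel

/-- Moment-map compatibility for the D5 resolution of a separated bow variety with
local charge splitting `w = w' + 1`: with `B'(x,λ) = (B₊x, b x)`,
`A'(x,λ) = A x - λ•a`, `a' = -B₋ a`, `b'(x,λ) = -λ`, `ι x = (x,0)`,
`a'' λ = (0,-λ)`, `b'' = b`, one has (i) `B'∘ι - ι∘B₊ + a''∘b'' = 0` identically,
and (ii) `B₋∘A' - A'∘B' + a'·b' = 0` iff `B₋∘A - A∘B₊ + a·b = 0`. -/
theorem stmt8 {K : Type*} [CommRing K] {Wm Wp : Type*}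
    [AddCommGroup Wm] [Module K Wm] [AddCommGroup Wp] [Module K Wp]
    (Bm : Wm →ₗ[K] Wm) (Bp : Wp →ₗ[K] Wp) (A : Wp →ₗ[K] Wm) (a : Wm) (b : Wp →ₗ[K] K) :
    (∀ x : Wp,
        ((Bp x, b x) : Wp × K) - ((Bp x, 0) : Wp × K) + ((0, -(b x)) : Wp × K) = 0)
    ∧ ((∀ (x : Wp) (l : K),
          Bm (A x - l • a) - (A (Bp x) - b x • a) + (-l) • (-(Bm a)) = 0)
        ↔ (∀ x : Wp, Bm (A x) - A (Bp x) + b x • a = 0)) := by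
  refine ⟨fun x => by ext <;> simp, ?_⟩
  simp only [resolved_moment_map_eq, forall_const]
end

section
/- Let K be a field, W₋ and W₊ K-vector spaces, and let B₊ ∈ End(W₊), A ∈ Hom(W₊, W₋), a ∈ W₋, b ∈ Hom(W₊, K). On W := W₊ × K define B'(x, λ) := (B₊x, b(x)), A'(x, λ) := A(x) − λ·a, and b'(x, λ) := −λ. Then the following are equivalent: (1) there exists a nonzero subspace S ⊆ W with B'(S) ⊆ S, A'(S) = 0 and b'(S) = 0; (2) there exists a nonzero subspace S₀ ⊆ W₊ with B₊(S₀) ⊆ S₀, A(S₀) = 0 and b(S₀) = 0. -/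
/-!
Because `b'(x, λ) = -λ`, a subspace killed by `b'` lies in `W₊ × 0`, where `B'`, `A'` restrict to
`B₊`, `A`; and `b` must vanish on it, since `b'(B' v) = -b(v.1)`. So the subspaces in (1) are
exactly the images of those in (2) under `x ↦ (x, 0)`, with inverse the first projection.
-/

namespace Submodule

variable {R M N : Type*} [Semiring R] [AddCommMonoid M] [Module R M] [AddCommMonoid N]
  [Module R N]

theorem map_fst_ne_bot_of_snd_eq_zero {S : Submodule R (M × N)} (hS : S ≠ ⊥)
    (hsnd : ∀ v ∈ S, v.2 = 0) : S.map (LinearMap.fst R M N) ≠ ⊥ := by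
  refine fun h ↦ hS <| (Submodule.eq_bot_iff S).2 fun v hv ↦ Prod.ext ?_ (hsnd v hv)
  exact (Submodule.eq_bot_iff _).1 h v.1 ⟨v, hv, rfl⟩

theorem map_inl_ne_bot {S : Submodule R M} (hS : S ≠ ⊥) :
    S.map (LinearMap.inl R M N) ≠ ⊥ :=
  (map_injective_of_injective LinearMap.inl_injective).ne_iff' (map_bot _) |>.2 hS

end Submodule

open Submodule in
/-- Equivalence of the stability condition (S1) before and after the D5 resolution
of a separated bow variety with local charge splitting `w = w' + 1`: with
`B'(x,λ) = (B₊x, b x)`, `A'(x,λ) = A x - λ•a`, `b'(x,λ) = -λ` on `W₊ × K`, there is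
a nonzero subspace `S ⊆ W₊ × K` with `B'(S) ⊆ S`, `A'(S) = 0`, `b'(S) = 0` iff
there is a nonzero subspace `S₀ ⊆ W₊` with `B₊(S₀) ⊆ S₀`, `A(S₀) = 0`, `b(S₀) = 0`. -/
theorem stmt10 {K : Type*} [Field K] {Wm Wp : Type*}
    [AddCommGroup Wm] [Module K Wm] [AddCommGroup Wp] [Module K Wp]
    (Bp : Wp →ₗ[K] Wp) (A : Wp →ₗ[K] Wm) (a : Wm) (b : Wp →ₗ[K] K) :
    (∃ S : Submodule K (Wp × K), S ≠ ⊥ ∧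
        (∀ v ∈ S, ((Bp v.1, b v.1) : Wp × K) ∈ S) ∧
        (∀ v ∈ S, A v.1 - v.2 • a = 0) ∧
        (∀ v ∈ S, -v.2 = (0 : K))) ↔
    (∃ S₀ : Submodule K Wp, S₀ ≠ ⊥ ∧
        (∀ x ∈ S₀, Bp x ∈ S₀) ∧ (∀ x ∈ S₀, A x = 0) ∧ (∀ x ∈ S₀, b x = 0)) := by
  constructor
  · rintro ⟨S, hS, hB, hA, hb⟩
    have hsnd : ∀ v ∈ S, v.2 = 0 := fun v hv ↦ neg_eq_zero.1 (hb v hv)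
    refine ⟨S.map (LinearMap.fst K Wp K), map_fst_ne_bot_of_snd_eq_zero hS hsnd, ?_, ?_, ?_⟩
    · rintro _ ⟨v, hv, rfl⟩
      exact ⟨_, hB v hv, rfl⟩
    · rintro _ ⟨v, hv, rfl⟩
      simpa [hsnd v hv] using hA v hv
    · rintro _ ⟨v, hv, rfl⟩
      exact hsnd _ (hB v hv)
  · rintro ⟨S₀, hS₀, hB, hA, hb⟩
    refine ⟨S₀.map (LinearMap.inl K Wp K), map_inl_ne_bot hS₀, ?_, ?_, ?_⟩
    · rintro _ ⟨x, hx, rfl⟩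
      exact ⟨Bp x, hB x hx, by simp [hb x hx]⟩
    · rintro _ ⟨x, hx, rfl⟩
      simp [hA x hx]
    · rintro _ ⟨x, hx, rfl⟩
      simp
end

section
/- Let F be a field and θ : Fˣ → F a function with θ(1) = 0. Let n ≥ 1, 1 ≤ k ≤ n, a₁, …, aₙ, z₁, z₂, ħ ∈ Fˣ, and assume θ((z₁/z₂)·ħ^{k−2}) ≠ 0. Define S_k(t) := (∏_{i=1}^{k−1} θ(aᵢ/t)) · θ((t/a_k)·(z₁/z₂)·ħ^{k−1}) / θ((z₁/z₂)·ħ^{k−2}) · (∏_{i=k+1}^{n} θ((t/aᵢ)·ħ)) for t ∈ Fˣ. Then: (1) S_k(a_l·ħ⁻¹) = 0 for every l with k < l ≤ n; and (2) S_k(a_k·ħ⁻¹) = (∏_{i=1}^{k−1} θ((aᵢ/a_k)·ħ)) · (∏_{i=k+1}^{n} θ(a_k/aᵢ)). -/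
/-!
Substituting `t = a_l ħ⁻¹` turns the factor `θ(t/a_l · ħ)` into `θ(1) = 0`, which lies in the
second product exactly when `k < l ≤ n`. At `t = a_k ħ⁻¹` the middle theta factor becomes
`θ((z₁/z₂) ħ^{k-2})`, i.e. the normalising denominator, and cancels.
-/

/-- The explicit formula for the elliptic stable envelope `Stab_C(f_k)` of
`T*P^{n-1}` in its separated bow-variety presentation (standard chamber). -/
def Ssep {F : Type*} [Field F] (θ : Fˣ → F) (n k : ℕ) (a : ℕ → Fˣ) (z₁ z₂ hbar t : Fˣ) : F :=
  (∏ i ∈ Finset.Ico 1 k, θ (a i / t)) *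
    θ (t / a k * (z₁ / z₂) * hbar ^ ((k : ℤ) - 1)) / θ (z₁ / z₂ * hbar ^ ((k : ℤ) - 2)) *
    ∏ i ∈ Finset.Ioc k n, θ (t / a i * hbar)

theorem mul_inv_div_mul_cancel {G : Type*} [CommGroup G] (x y h : G) : x * h⁻¹ / y * h = x / y := by
  rw [div_mul_eq_mul_div, inv_mul_cancel_right]

section Restriction

variable {F : Type*} [Field F] (θ : Fˣ → F) (n k : ℕ) (a : ℕ → Fˣ) (z₁ z₂ hbar : Fˣ)

theorem Ssep_restrict_eq_zero (hθ : θ 1 = 0) {l : ℕ} (hl : l ∈ Finset.Ioc k n) :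
    Ssep θ n k a z₁ z₂ hbar (a l * hbar⁻¹) = 0 := by
  have hfactor : θ (a l * hbar⁻¹ / a l * hbar) = 0 := by
    rw [mul_inv_div_mul_cancel, div_self', hθ]
  rw [Ssep, Finset.prod_eq_zero hl hfactor, mul_zero]

theorem Ssep_restrict_self (hden : θ (z₁ / z₂ * hbar ^ ((k : ℤ) - 2)) ≠ 0) :
    Ssep θ n k a z₁ z₂ hbar (a k * hbar⁻¹)
      = (∏ i ∈ Finset.Ico 1 k, θ (a i / a k * hbar)) * ∏ i ∈ Finset.Ioc k n, θ (a k / a i) := by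
  have hmiddle : a k * hbar⁻¹ / a k * (z₁ / z₂) * hbar ^ ((k : ℤ) - 1)
      = z₁ / z₂ * hbar ^ ((k : ℤ) - 2) := by
    rw [mul_div_cancel_left, mul_comm hbar⁻¹, mul_assoc, ← zpow_neg_one, ← zpow_add]
    congr 2
    ring
  rw [Ssep, hmiddle, mul_div_assoc, div_self hden, mul_one]
  congr 1
  · exact Finset.prod_congr rfl fun i _ => by rw [div_mul_eq_div_div, div_inv_eq_mul]
  · exact Finset.prod_congr rfl fun i _ => by rw [mul_inv_div_mul_cancel]

end Restriction

theorem stmt13_general {F : Type*} [Field F] (θ : Fˣ → F) (hθ : θ 1 = 0)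
    (n k : ℕ) (a : ℕ → Fˣ) (z₁ z₂ hbar : Fˣ)
    (hden : θ (z₁ / z₂ * hbar ^ ((k : ℤ) - 2)) ≠ 0) :
    (∀ l, k < l → l ≤ n → Ssep θ n k a z₁ z₂ hbar (a l * hbar⁻¹) = 0)
    ∧ Ssep θ n k a z₁ z₂ hbar (a k * hbar⁻¹)
        = (∏ i ∈ Finset.Ico 1 k, θ (a i / a k * hbar)) * ∏ i ∈ Finset.Ioc k n, θ (a k / a i) :=
  ⟨fun _ hkl hln => Ssep_restrict_eq_zero θ n k a z₁ z₂ hbar hθ (Finset.mem_Ioc.mpr ⟨hkl, hln⟩),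
    Ssep_restrict_self θ n k a z₁ z₂ hbar hden⟩

/-- Triangularity and diagonal restriction of the stable envelope formulas for
`T*P^{n-1}` (separated presentation): restriction to `f_l` is `t ↦ a_l·hbar⁻¹`. -/
theorem stmt13 {F : Type*} [Field F] (θ : Fˣ → F) (hθ : θ 1 = 0)
    (n k : ℕ) (hn : 1 ≤ n) (hk1 : 1 ≤ k) (hkn : k ≤ n)
    (a : ℕ → Fˣ) (z₁ z₂ hbar : Fˣ)
    (hden : θ (z₁ / z₂ * hbar ^ ((k : ℤ) - 2)) ≠ 0) :
    (∀ l, k < l → l ≤ n → Ssep θ n k a z₁ z₂ hbar (a l * hbar⁻¹) = 0)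
    ∧ Ssep θ n k a z₁ z₂ hbar (a k * hbar⁻¹)
        = (∏ i ∈ Finset.Ico 1 k, θ (a i / a k * hbar)) * ∏ i ∈ Finset.Ioc k n, θ (a k / a i) :=
  stmt13_general θ hθ n k a z₁ z₂ hbar hden
end

section
/- Let F be a field, a₁, a₂, ħ ∈ F, and set u := a₁ − a₂. Assume u ≠ 0 and u + ħ ≠ 0. Define the 2×2 matrices S₁ := [[u, ħ], [0, u + ħ]] and S₂ := [[−u + ħ, 0], [ħ, −u]]. Then S₁ is invertible and S₁⁻¹ · S₂ = (u + ħ)⁻¹ · [[−u, ħ], [ħ, −u]]. Equivalently, S₁ · [[−u, ħ], [ħ, −u]] = (u + ħ) · S₂. -/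
/-- The matrices `S₁`, `S₂` of fixed-point restrictions of the cohomological stable
envelopes of `T*P¹` for the two chambers satisfy: `S₁` is invertible and
`S₁⁻¹·S₂ = (u+hbar)⁻¹·[[-u, hbar], [hbar, -u]]` (Yang's R-matrix); equivalently
`S₁·[[-u, hbar], [hbar, -u]] = (u+hbar)·S₂`. Here `u = a₁ - a₂`. -/
theorem stmt15 {F : Type*} [Field F] (a₁ a₂ hbar u : F) (hu : u = a₁ - a₂)
    (h1 : u ≠ 0) (h2 : u + hbar ≠ 0) :
    IsUnit (!![u, hbar; 0, u + hbar] : Matrix (Fin 2) (Fin 2) F) ∧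
    (!![u, hbar; 0, u + hbar] : Matrix (Fin 2) (Fin 2) F)⁻¹ * !![-u + hbar, 0; hbar, -u]
      = (u + hbar)⁻¹ • !![-u, hbar; hbar, -u] ∧
    (!![u, hbar; 0, u + hbar] : Matrix (Fin 2) (Fin 2) F) * !![-u, hbar; hbar, -u]
      = (u + hbar) • !![-u + hbar, 0; hbar, -u] := by
  have hdet : (!![u, hbar; 0, u + hbar] : Matrix (Fin 2) (Fin 2) F).det ≠ 0 := by
    simp [Matrix.det_fin_two_of]
    exact ⟨h1, h2⟩
  have hunit := (Matrix.isUnit_iff_isUnit_det _).2 (isUnit_iff_ne_zero.2 hdet)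
  refine ⟨hunit, ?_, ?_⟩
  · rw [Matrix.inv_def, Matrix.adjugate_fin_two_of]
    ext i j
    fin_cases i <;> fin_cases j
    · simp [Matrix.mul_apply, Fin.sum_univ_succ, Matrix.det_fin_two_of]
      field_simp
      ring
    · simp [Matrix.mul_apply, Fin.sum_univ_succ, Matrix.det_fin_two_of]
      field_simp
    · simp [Matrix.mul_apply, Fin.sum_univ_succ, Matrix.det_fin_two_of]
      field_simp
      left; trivial
    · simp [Matrix.mul_apply, Fin.sum_univ_succ, Matrix.det_fin_two_of]
      field_simp
      left; trivial
  · ext i j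
    fin_cases i <;> fin_cases j <;>
      simp [Matrix.mul_apply, Fin.sum_univ_succ] <;> ring
end
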